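/- arXiv:2107.07637 — 3 statements merged into one kernel-verified Lean document; each statement's English description precedes it below -/
import Mathlib

section
/- For every integer m ≥ 7, the number of pairs (ℓ, k) with ℓ a positive integer and k an integer such that ℓ² + P_m(k) = 3 is zero, and the number of such pairs with 2ℓ² + P_m(k) = 3 is exactly one (namely (ℓ,k) = (1,1)). -/
/-- Sum of odd divisors: `σ_odd n = ∑_{d ∣ n, d odd} d` for `n > 0`, and `0` for `n ≤ 0`. -/
def sigmaOdd (n : ℤ) : ℤ :=
  if 0 < n then ∑ d ∈ n.toNat.divisors.filter (fun d => Odd d), (d : ℤ) else 0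

/-- The `k`-th generalized `m`-gonal number `P_m(k) = ((m-2)k² - (m-4)k)/2`. -/
def Pgon (m k : ℤ) : ℤ := ((m - 2) * k ^ 2 - (m - 4) * k) / 2

/-! For `m ≥ 7` the values `P_m(k)` below `4` are `P_m(0) = 0` and `P_m(1) = 1` only
(the next smallest, `P_m(-1) = m - 3` and `P_m(2) = m`, are at least `4`). Hence
`ℓ² + P_m(k) = 3` would force `ℓ² ∈ {2, 3}`, and `2ℓ² + P_m(k) = 3` forces `k = 1`, `ℓ = 1`. -/

lemma two_mul_Pgon (m k : ℤ) : 2 * Pgon m k = (m - 2) * k ^ 2 - (m - 4) * k := by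
  refine Int.mul_ediv_cancel' ?_
  have : (m - 2) * k ^ 2 - (m - 4) * k = (m - 2) * (k * (k + 1)) - 2 * ((m - 3) * k) := by ring
  rw [this]
  exact dvd_sub (dvd_mul_of_dvd_right (Int.even_mul_succ_self k).two_dvd _) (dvd_mul_right 2 _)

lemma Pgon_zero (m : ℤ) : Pgon m 0 = 0 := by
  simp [Pgon]

lemma Pgon_one (m : ℤ) : Pgon m 1 = 1 := by
  linarith [two_mul_Pgon m 1]

lemma four_le_Pgon {m k : ℤ} (hm : 7 ≤ m) (hk0 : k ≠ 0) (hk1 : k ≠ 1) : 4 ≤ Pgon m k := by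
  have h := two_mul_Pgon m k
  rcases lt_or_gt_of_ne hk0 with hk | hk
  · nlinarith [mul_le_mul_of_nonneg_left (show 1 ≤ k ^ 2 by nlinarith) (by linarith : (0 : ℤ) ≤ m - 2),
      mul_le_mul_of_nonneg_left (show 1 ≤ -k by omega) (by linarith : (0 : ℤ) ≤ m - 4)]
  · have hk2 : 2 ≤ k := by omega
    have hfactor : 2 * Pgon m k = k * ((m - 2) * k - (m - 4)) := by rw [h]; ring
    have hm_le : m ≤ (m - 2) * k - (m - 4) := by nlinarith
    nlinarith

lemma eq_zero_or_eq_one_of_Pgon_lt_four {m k : ℤ} (hm : 7 ≤ m) (h : Pgon m k < 4) :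
    k = 0 ∨ k = 1 := by
  by_contra! hk
  exact h.not_ge (four_le_Pgon hm hk.1 hk.2)

lemma Int.eq_one_or_four_le_sq {l : ℤ} (hl : 0 < l) : l = 1 ∨ 4 ≤ l ^ 2 := by
  rcases (show l = 1 ∨ 2 ≤ l by omega) with h | h
  · exact .inl h
  · exact .inr (by nlinarith)

lemma eq_of_mul_sq_add_Pgon_eq_three {m c l k : ℤ} (hm : 7 ≤ m) (hc : 1 ≤ c) (hl : 0 < l)
    (h : c * l ^ 2 + Pgon m k = 3) : l = 1 ∧ (k = 0 ∧ c = 3 ∨ k = 1 ∧ c = 2) := by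
  have hsq_pos : 0 < l ^ 2 := by positivity
  have hsq_le : l ^ 2 ≤ c * l ^ 2 := le_mul_of_one_le_left hsq_pos.le hc
  rcases eq_zero_or_eq_one_of_Pgon_lt_four hm (show Pgon m k < 4 by omega) with rfl | rfl <;>
    rcases Int.eq_one_or_four_le_sq hl with rfl | hl4 <;>
    simp only [Pgon_zero, Pgon_one, one_pow, mul_one] at h <;>
    omega

theorem counts_at_three (m : ℤ) (hm : 7 ≤ m) :
    {p : ℤ × ℤ | 0 < p.1 ∧ p.1 ^ 2 + Pgon m p.2 = 3} = ∅ ∧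
    {p : ℤ × ℤ | 0 < p.1 ∧ 2 * p.1 ^ 2 + Pgon m p.2 = 3} = {(1, 1)} := by
  constructor
  · refine Set.eq_empty_of_forall_notMem fun p ⟨hl, h⟩ => ?_
    have := eq_of_mul_sq_add_Pgon_eq_three hm le_rfl hl (by rwa [one_mul])
    omega
  · ext ⟨l, k⟩
    simp only [Set.mem_ofPred_eq, Set.mem_singleton_iff, Prod.mk.injEq]
    constructor
    · rintro ⟨hl, h⟩
      have := eq_of_mul_sq_add_Pgon_eq_three hm (by norm_num) hl h
      omega
    · rintro ⟨rfl, rfl⟩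
      exact ⟨one_pos, by rw [Pgon_one]; norm_num⟩
end

section
/- If m is a positive integer such that for all positive integers n not of the form P_5(j), the sum ∑_{k ∈ ℤ} σ_odd(n - P_5(k)) ≡ 0 (mod m), then m ∈ {1, 2, 3, 6}. -/
/-! Taking `n = 3` in the hypothesis: only `k ∈ {-1, 0, 1}` give `3 - P_5(k) > 0`, and the
corresponding values `σ_odd 2 + σ_odd 3 + σ_odd 2 = 1 + 4 + 1` add up to `6`, so `m ∣ 6`. -/

lemma sigmaOdd_of_nonpos {n : ℤ} (hn : n ≤ 0) : sigmaOdd n = 0 :=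
  if_neg (not_lt.mpr hn)

lemma five_le_Pgon_five {k : ℤ} (hk : 2 ≤ |k|) : 5 ≤ Pgon 5 k := by
  rw [Pgon, Int.le_ediv_iff_mul_le two_pos]
  rcases le_abs'.mp hk with hk | hk <;> nlinarith

lemma mem_of_Pgon_five_le_four {k : ℤ} (hk : Pgon 5 k ≤ 4) : k ∈ ({-1, 0, 1} : Finset ℤ) := by
  have : |k| < 2 := lt_of_not_ge fun h => by linarith [five_le_Pgon_five h]
  rw [abs_lt] at this
  simp only [Finset.mem_insert, Finset.mem_singleton]
  omega

lemma not_exists_Pgon_five_eq_three : ¬ ∃ j : ℤ, Pgon 5 j = 3 := by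
  rintro ⟨j, hj⟩
  have hj' := mem_of_Pgon_five_le_four (k := j) (by omega)
  simp only [Finset.mem_insert, Finset.mem_singleton] at hj'
  rcases hj' with rfl | rfl | rfl <;> revert hj <;> decide

lemma finsum_sigmaOdd_three_sub_Pgon_five : ∑ᶠ k : ℤ, sigmaOdd (3 - Pgon 5 k) = 6 := by
  have hsupp : Function.support (fun k : ℤ => sigmaOdd (3 - Pgon 5 k))
      ⊆ (({-1, 0, 1} : Finset ℤ) : Set ℤ) := by
    intro k hk
    by_contra hk'
    have : 4 < Pgon 5 k := lt_of_not_ge fun h => hk' (mem_of_Pgon_five_le_four h)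
    exact hk (sigmaOdd_of_nonpos (by omega))
  rw [finsum_eq_finsetSum_of_support_subset _ hsupp]
  decide

theorem conj_two_only_if_general (m : ℕ)
    (h : ∀ n : ℤ, 0 < n → (¬ ∃ j : ℤ, Pgon 5 j = n) →
      (m : ℤ) ∣ ∑ᶠ k : ℤ, sigmaOdd (n - Pgon 5 k)) :
    m ∈ ({1, 2, 3, 6} : Set ℕ) := by
  have hdvd : (m : ℤ) ∣ 6 :=
    finsum_sigmaOdd_three_sub_Pgon_five ▸ h 3 three_pos not_exists_Pgon_five_eq_three
  have hm : m ∈ Nat.divisors 6 := Nat.mem_divisors.mpr ⟨by exact_mod_cast hdvd, by norm_num⟩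
  have hdiv : Nat.divisors 6 = {1, 2, 3, 6} := by decide
  simpa [hdiv] using hm

theorem conj_two_only_if (m : ℕ) (hm : 0 < m)
    (h : ∀ n : ℤ, 0 < n → (¬ ∃ j : ℤ, Pgon 5 j = n) →
      (m : ℤ) ∣ ∑ᶠ k : ℤ, sigmaOdd (n - Pgon 5 k)) :
    m ∈ ({1, 2, 3, 6} : Set ℕ) :=
  conj_two_only_if_general m h
end

section
/- For every nonnegative integer n, ∑_{k ∈ ℤ} (-1)^k p(n - P_5(k)) = δ_{0,n}, where p is the partition function (with p of a negative integer defined to be 0) and P_5(k) = (3k² - k)/2. -/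
/-- The partition function, extended by  to negative integers. -/
def partFun (n : ℤ) : ℤ :=
  if 0 ≤ n then (Fintype.card (Nat.Partition n.toNat) : ℤ) else 0

/-!
The generating function `∑ p(n) xⁿ = ∏ᵢ 1/(1 - xⁱ)` of the partition function is inverse to
`∏ᵢ (1 - xⁱ)`, which by Euler's pentagonal number theorem (available in Mathlib as
`PowerSeries.WithPiTopology.hasProd_one_sub_X_pow`) equals `∑ₖ (-1)ᵏ x^{P₅(k)}`. The recurrence
is the coefficient of `xⁿ` in the product of these two series.
-/

open Finset PowerSeries
open scoped PowerSeries.WithPiTopology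

namespace PowerSeries

variable (R : Type*) [CommRing R]

theorem mk_card_partition_mul_pentagonalSeries :
    mk (fun n ↦ (Fintype.card n.Partition : R)) * pentagonalSeries R = 1 := by
  let _ : TopologicalSpace R := ⊥
  have _ : DiscreteTopology R := ⟨rfl⟩
  have hgenFun : HasProd (fun i ↦ ∑' j : ℕ, (X : R⟦X⟧) ^ ((i + 1) * j))
      (mk fun n ↦ (Fintype.card n.Partition : R)) := by
    simpa [Nat.Partition.restricted] using
      Nat.Partition.hasProd_powerSeriesMk_card_restricted R (fun _ ↦ True)
  refine (hgenFun.mul (WithPiTopology.hasProd_one_sub_X_pow R)).unique ?_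
  convert hasProd_one with i
  simp_rw [pow_mul]
  exact WithPiTopology.tsum_pow_mul_one_sub_of_constantCoeff_eq_zero (by simp)

theorem sum_range_coeff_pentagonalSeries_mul_card_partition (n : ℕ) :
    ∑ a ∈ range (n + 1), (pentagonalSeries R).coeff a * Fintype.card (n - a).Partition =
      if n = 0 then (1 : R) else 0 := by
  have h := congrArg (coeff n) (mk_card_partition_mul_pentagonalSeries R)
  rw [mul_comm, coeff_mul, Nat.sum_antidiagonal_eq_sum_range_succ
    (fun a b ↦ (pentagonalSeries R).coeff a * (mk fun n ↦ (Fintype.card n.Partition : R)).coeff b)]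
    at h
  simpa [coeff_one] using h

end PowerSeries

theorem Pgon_five_eq_pentagonal (k : ℤ) : Pgon 5 k = pentagonal k := by
  rw [natCast_pentagonal, Pgon]
  ring_nf

theorem partFun_natCast (m : ℕ) : partFun m = Fintype.card m.Partition := by
  simp [partFun]

theorem partFun_of_neg {m : ℤ} (hm : m < 0) : partFun m = 0 :=
  if_neg hm.not_ge

theorem pentagonal_number_theorem_recurrence (n : ℕ) :
    ∑ᶠ k : ℤ, (-1 : ℤ) ^ k.natAbs * partFun ((n : ℤ) - Pgon 5 k) =
      if n = 0 then 1 else 0 := by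
  set g : ℕ → ℤ := fun a ↦ (pentagonalSeries ℤ).coeff a * partFun (n - a)
  have hterm (k : ℤ) : (-1 : ℤ) ^ k.natAbs * partFun (n - Pgon 5 k) = g (pentagonal k) := by
    simp [g, Pgon_five_eq_pentagonal]
  have hsupport_pentagonal : Function.support g ⊆ Set.range pentagonal := fun a ha ↦ by
    by_contra h
    exact ha (by simp [g, coeff_pentagonalSeries_eq_zero ℤ h])
  have hsupport_range : Function.support g ⊆ range (n + 1) := fun a ha ↦ by
    by_contra h
    rw [coe_range, Set.mem_Iio, not_lt] at h
    exact ha (by simp [g, partFun_of_neg (show (n : ℤ) - a < 0 by omega)])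
  calc ∑ᶠ k : ℤ, (-1 : ℤ) ^ k.natAbs * partFun (n - Pgon 5 k)
      = ∑ᶠ a ∈ Set.range pentagonal, g a := by
        rw [finsum_mem_range pentagonal_injective]
        exact finsum_congr hterm
    _ = ∑ a ∈ range (n + 1), g a := by
        rw [finsum_mem_inter_support_eq' g _ _
          fun a ha ↦ ⟨fun _ ↦ hsupport_range ha, fun _ ↦ hsupport_pentagonal ha⟩,
          finsum_mem_coe_finset]
    _ = ∑ a ∈ range (n + 1), (pentagonalSeries ℤ).coeff a * Fintype.card (n - a).Partition := by
        refine sum_congr rfl fun a ha ↦ ?_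
        rw [mem_range] at ha
        dsimp only [g]
        rw [← Nat.cast_sub (by omega), partFun_natCast]
    _ = if n = 0 then 1 else 0 := sum_range_coeff_pentagonalSeries_mul_card_partition ℤ n
end
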